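/- If X is a finite set, then the C-algebra 𝟛^X is atomic: every element β ≠ F is a permutation-invariant join of finitely many atoms. -/
import Mathlib


/-- The three truth values of McCarthy's three-valued logic. -/
inductive Three : Type
  | T | F | U
deriving DecidableEq

open Three

/-- Negation in `𝟛`. -/
def tneg : Three → Three
  | T => F
  | F => T
  | U => U

/-- McCarthy's left-sequential conjunction. -/
def tand : Three → Three → Three
  | T, x => x
  | F, _ => F
  | U, _ => U

/-- McCarthy's left-sequential disjunction. -/
def tor : Three → Three → Three
  | T, _ => T
  | F, x => x
  | U, _ => U

/-- Pointwise disjunction on `𝟛^X`. -/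
def fOr {X : Type*} (α β : X → Three) : X → Three := fun x => tor (α x) (β x)

/-- Pointwise conjunction on `𝟛^X`. -/
def fAnd {X : Type*} (α β : X → Three) : X → Three := fun x => tand (α x) (β x)

/-- Pointwise negation on `𝟛^X`. -/
def fNeg {X : Type*} (α : X → Three) : X → Three := fun x => tneg (α x)

/-- The constant function `F`, the bottom element of `𝟛^X`. -/
def bF {X : Type*} : X → Three := fun _ => F

/-- The order on `𝟛^X`: `α ≤ β` iff `α ∨ β = β`. -/
def fLe {X : Type*} (α β : X → Three) : Prop := fOr α β = β

/-- `α` is an atom of `𝟛^X`: `α ≠ F` and any `b` with `F ≤ b ≤ α`, `b ≠ α` is `F`. -/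
def IsAtom3 {X : Type*} (α : X → Three) : Prop :=
  α ≠ bF ∧ ∀ β : X → Three, fLe bF β → fLe β α → β ≠ α → β = bF

lemma tor_F_right (x : Three) : tor x F = x := by cases x <;> rfl
lemma tor_self (x : Three) : tor x x = x := by cases x <;> rfl

lemma foldr_in (c : Three) : ∀ L : List Three, (∀ v ∈ L, v = F ∨ v = c) →
    L.foldr tor F = F ∨ L.foldr tor F = c := by
  intro L
  induction L with
  | nil => simp
  | cons v L ih =>
    intro h
    have hv := h v (by simp)
    have hL := ih (fun w hw => h w (by simp [hw]))
    simp only [List.foldr_cons]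
    rcases hv with rfl | rfl <;> rcases hL with h' | h' <;> rw [h']
    · exact Or.inl rfl
    · exact Or.inr rfl
    · exact Or.inr (tor_F_right v)
    · exact Or.inr (tor_self v)

lemma foldr_allF : ∀ L : List Three, (∀ v ∈ L, v = F) → L.foldr tor F = F := by
  intro L
  induction L with
  | nil => intro _; rfl
  | cons v L ih =>
    intro h
    have hv := h v (by simp)
    simp only [List.foldr_cons, hv, ih (fun w hw => h w (by simp [hw]))]
    rfl

lemma foldr_one (c : Three) (hc : c ≠ F) : ∀ L : List Three,
    (∀ v ∈ L, v = F ∨ v = c) → c ∈ L → L.foldr tor F = c := by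
  intro L
  induction L with
  | nil => simp
  | cons v L ih =>
    intro h hm
    have hv := h v (by simp)
    have hall : ∀ w ∈ L, w = F ∨ w = c := fun w hw => h w (by simp [hw])
    simp only [List.foldr_cons]
    rcases hv with rfl | rfl
    · have : c ∈ L := by
        rcases List.mem_cons.mp hm with rfl | h'
        · exact absurd rfl hc
        · exact h'
      rw [ih hall this]; rfl
    · rcases foldr_in v L hall with h' | h' <;> rw [h']
      · exact tor_F_right v
      · exact tor_self v

lemma foldr_apply {X : Type*} (y : X) : ∀ l : List (X → Three),
    (l.foldr fOr bF) y = (l.map (fun a => a y)).foldr tor F := by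
  intro l
  induction l with
  | nil => rfl
  | cons a l ih => simp [fOr, ih]

/-- For finite `X`, the C-algebra `𝟛^X` is atomic: every `β ≠ F` is a
permutation-invariant join of finitely many atoms. -/
theorem stmt12 {X : Type*} [Finite X] (β : X → Three) (hβ : β ≠ bF) :
    ∃ l : List (X → Three), (∀ a ∈ l, IsAtom3 a) ∧
      ∀ l' : List (X → Three), l'.Perm l → l'.foldr fOr bF = β := by
  classical
  haveI := Fintype.ofFinite X
  set s := Finset.univ.filter (fun x => β x ≠ F) with hs
  set atom : X → (X → Three) := fun x y => if y = x then β x else F with hatom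
  refine ⟨s.toList.map atom, ?_, ?_⟩
  · intro a ha
    rcases List.mem_map.mp ha with ⟨x, hx, rfl⟩
    have hβx : β x ≠ F := (Finset.mem_filter.mp (Finset.mem_toList.mp hx)).2
    constructor
    · intro h
      have := congrFun h x
      simp [hatom, bF] at this
      exact hβx this
    · intro γ _ hle hne
      have key : ∀ y, tor (γ y) (atom x y) = atom x y := fun y => congrFun hle y
      have hout : ∀ y, y ≠ x → γ y = F := by
        intro y hy
        have := key y
        simp only [hatom, if_neg hy] at this
        rwa [tor_F_right] at this
      have hx' : γ x = F := by
        have := key x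
        simp only [hatom, if_pos rfl] at this
        cases h : γ x
        · rw [h] at this; simp [tor] at this
          exfalso; apply hne; funext z
          by_cases hz : z = x
          · subst hz; rw [h]; simp only [hatom, if_pos rfl]; exact this
          · rw [hout z hz]; simp [hatom, hz]
        · rfl
        · rw [h] at this; simp [tor] at this
          exfalso; apply hne; funext z
          by_cases hz : z = x
          · subst hz; rw [h]; simp only [hatom, if_pos rfl]; exact this
          · rw [hout z hz]; simp [hatom, hz]
      funext z
      by_cases hz : z = x
      · subst hz; exact hx'
      · exact hout z hz
  · intro l' hperm
    funext y
    rw [foldr_apply]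
    have hpm : (l'.map (fun a => a y)).Perm ((s.toList.map atom).map (fun a => a y)) :=
      hperm.map _
    have hall : ∀ v ∈ l'.map (fun a => a y), v = F ∨ v = β y := by
      intro v hv
      have hv' := hpm.mem_iff.mp hv
      rcases List.mem_map.mp hv' with ⟨a, ha, rfl⟩
      rcases List.mem_map.mp ha with ⟨x, hx, rfl⟩
      simp only [hatom]
      by_cases hyx : y = x
      · subst hyx; simp
      · simp [hyx]
    by_cases hy : β y = F
    · rw [hy, foldr_allF]
      intro v hv
      rcases hall v hv with h | h
      · exact h
      · rw [h, hy]
    · apply foldr_one (β y) hy _ hall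
      apply hpm.mem_iff.mpr
      have hys : y ∈ s := Finset.mem_filter.mpr ⟨Finset.mem_univ y, hy⟩
      have : atom y ∈ s.toList.map atom := List.mem_map.mpr ⟨y, Finset.mem_toList.mpr hys, rfl⟩
      refine List.mem_map.mpr ⟨atom y, this, ?_⟩
      simp [hatom]
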